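/- Let s: ℝ → ℝ be a smooth, positive, π-periodic function, and define the curve Λ(θ) = (x(θ), y(θ)) by x(θ) := ∫₀^θ cos(α)/s(α)³ dα and y(θ) := ∫₀^θ sin(α)/s(α)³ dα. Then: (a) Λ is closed, i.e. x(2π) = 0 and y(2π) = 0; (b) x'(θ)y''(θ) − y'(θ)x''(θ) = 1/s(θ)⁶ and the Euclidean curvature of Λ satisfies (x'y'' − y'x'')/((x'² + y'²)^(3/2)) = s³ at every θ. -/

import Mathlib

open Real Set Filter MeasureTheory

noncomputable section

/-!
The integrands `cos α / s α ³` and `sin α / s α ³` change sign under `α ↦ α + π`, so their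
integrals over `[0, 2π]` vanish and `Λ` is closed. The velocity `Λ' = s⁻³ (cos θ, sin θ)` has
speed `w = s⁻³` and turning angle `θ`, so `x'y'' - y'x'' = w² = s⁻⁶` and the curvature is
`w² / w³ = s³`.
-/

theorem Function.Antiperiodic.div_periodic {α β : Type*} [Add α] [DivisionRing β]
    {f g : α → β} {c : α} (hf : Function.Antiperiodic f c) (hg : Function.Periodic g c) :
    Function.Antiperiodic (f / g) c := fun x => by
  simp only [Pi.div_apply, hf x, hg x, neg_div]

theorem Function.Antiperiodic.intervalIntegral_add_two_mul_eq_zero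
    {E : Type*} [NormedAddCommGroup E] [NormedSpace ℝ E] {f : ℝ → E} {c : ℝ}
    (hf : Function.Antiperiodic f c) (hcont : Continuous f) (a : ℝ) :
    ∫ x in a..a + 2 * c, f x = 0 := by
  have hsecond : ∫ x in a + c..a + 2 * c, f x = -∫ x in a..a + c, f x := by
    rw [← intervalIntegral.integral_neg, two_mul, ← add_assoc,
      ← intervalIntegral.integral_comp_add_right]
    exact intervalIntegral.integral_congr fun x _ => hf x
  rw [← intervalIntegral.integral_add_adjacent_intervals (b := a + c)
    (hcont.intervalIntegrable _ _) (hcont.intervalIntegrable _ _), hsecond, add_neg_cancel]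

section TurningAngle

variable {u v w : ℝ → ℝ}

theorem wronskian_eq_sq_of_deriv_eq_mul_cos_sin
    (hu : deriv u = fun t => w t * cos t) (hv : deriv v = fun t => w t * sin t) {θ : ℝ}
    (hw : DifferentiableAt ℝ w θ) :
    deriv u θ * deriv (deriv v) θ - deriv v θ * deriv (deriv u) θ = w θ ^ 2 := by
  rw [hu, hv, (hw.hasDerivAt.fun_mul (hasDerivAt_cos θ)).deriv,
    (hw.hasDerivAt.fun_mul (hasDerivAt_sin θ)).deriv]
  linear_combination w θ ^ 2 * sin_sq_add_cos_sq θ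

theorem deriv_sq_add_deriv_sq_of_deriv_eq_mul_cos_sin
    (hu : deriv u = fun t => w t * cos t) (hv : deriv v = fun t => w t * sin t) (θ : ℝ) :
    deriv u θ ^ 2 + deriv v θ ^ 2 = w θ ^ 2 := by
  rw [hu, hv]
  linear_combination w θ ^ 2 * cos_sq_add_sin_sq θ

theorem curvature_eq_inv_of_deriv_eq_mul_cos_sin
    (hu : deriv u = fun t => w t * cos t) (hv : deriv v = fun t => w t * sin t) {θ : ℝ}
    (hw : DifferentiableAt ℝ w θ) (hpos : 0 < w θ) :
    (deriv u θ * deriv (deriv v) θ - deriv v θ * deriv (deriv u) θ) /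
      ((deriv u θ ^ 2 + deriv v θ ^ 2) ^ ((3 : ℝ) / 2)) = (w θ)⁻¹ := by
  have hspeed : (w θ ^ 2) ^ ((3 : ℝ) / 2) = w θ ^ 3 := by
    rw [← rpow_natCast, ← rpow_mul hpos.le, ← rpow_natCast]
    norm_num
  rw [wronskian_eq_sq_of_deriv_eq_mul_cos_sin hu hv hw,
    deriv_sq_add_deriv_sq_of_deriv_eq_mul_cos_sin hu hv, hspeed]
  field_simp

end TurningAngle

theorem dual_curve_closed_and_curvature
    (s : ℝ → ℝ) (hsmooth : ContDiff ℝ (⊤ : ℕ∞) s) (hpos : ∀ θ, 0 < s θ)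
    (hper : Function.Periodic s π)
    (x y : ℝ → ℝ)
    (hx : x = fun θ => ∫ α in (0:ℝ)..θ, Real.cos α / s α ^ 3)
    (hy : y = fun θ => ∫ α in (0:ℝ)..θ, Real.sin α / s α ^ 3) :
    (x (2 * π) = 0 ∧ y (2 * π) = 0) ∧
      (∀ θ, deriv x θ * deriv (deriv y) θ - deriv y θ * deriv (deriv x) θ = 1 / s θ ^ 6) ∧
      ∀ θ,
        (deriv x θ * deriv (deriv y) θ - deriv y θ * deriv (deriv x) θ) /
            ((deriv x θ ^ 2 + deriv y θ ^ 2) ^ ((3:ℝ) / 2)) = s θ ^ 3 := by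
  have hs3 : ∀ α, s α ^ 3 ≠ 0 := fun α => pow_ne_zero 3 (hpos α).ne'
  have hs3_per : Function.Periodic (fun α => s α ^ 3) π := hper.comp (· ^ 3)
  have hs3_cont : Continuous fun α => s α ^ 3 := hsmooth.continuous.pow 3
  have hcos : Continuous fun α => cos α / s α ^ 3 := continuous_cos.div hs3_cont hs3
  have hsin : Continuous fun α => sin α / s α ^ 3 := continuous_sin.div hs3_cont hs3
  set w : ℝ → ℝ := fun α => (s α ^ 3)⁻¹
  have hdx : deriv x = fun θ => w θ * cos θ := by
    funext θ; rw [hx, hcos.deriv_integral, div_eq_inv_mul]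
  have hdy : deriv y = fun θ => w θ * sin θ := by
    funext θ; rw [hy, hsin.deriv_integral, div_eq_inv_mul]
  have hw : Differentiable ℝ w := ((hsmooth.differentiable (by simp)).pow 3).inv hs3
  refine ⟨⟨?_, ?_⟩, fun θ => ?_, fun θ => ?_⟩
  · simpa [hx] using
      (cos_antiperiodic.div_periodic hs3_per).intervalIntegral_add_two_mul_eq_zero hcos 0
  · simpa [hy] using
      (sin_antiperiodic.div_periodic hs3_per).intervalIntegral_add_two_mul_eq_zero hsin 0
  · rw [wronskian_eq_sq_of_deriv_eq_mul_cos_sin hdx hdy (hw θ)]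
    simp only [w]
    ring
  · rw [curvature_eq_inv_of_deriv_eq_mul_cos_sin hdx hdy (hw θ)
      (inv_pos.2 (pow_pos (hpos θ) 3)), inv_inv]

end
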